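/- arXiv:2605.12568 — 4 statements merged into one kernel-verified Lean document; each statement's English description precedes it below -/
import Mathlib

section
/- Let m ≥ 1 be an integer. For all t ∈ [0, 1/2], I_t(m, m) ≤ (1/2)·[4t(1-t)]^{m-1}. -/
open MeasureTheory Real Set
open scoped ENNReal NNReal

/-- The Beta function `B(a,b)` as an integral. -/
noncomputable def betaFun (a b : ℝ) : ℝ :=
  ∫ x in (0:ℝ)..1, x ^ (a - 1) * (1 - x) ^ (b - 1)

/-- The Beta(a,b) probability measure on `ℝ`. -/
noncomputable def betaMeasure (a b : ℝ) : Measure ℝ :=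
  MeasureTheory.volume.withDensity
    (Set.indicator (Set.Ioo 0 1)
      (fun t => ENNReal.ofReal (t ^ (a - 1) * (1 - t) ^ (b - 1) / betaFun a b)))

/-- The regularised incomplete Beta function `I_x(a,b)`, with the convention that it is
`0` for `x ≤ 0` and `1` for `x ≥ 1`. -/
noncomputable def regIncBeta (a b x : ℝ) : ℝ :=
  if x ≤ 0 then 0 else if 1 ≤ x then 1
  else (∫ s in (0:ℝ)..x, s ^ (a - 1) * (1 - s) ^ (b - 1)) / betaFun a b

/-- The uniform probability measure on the sphere of radius `a` centred at the origin
of `ℝ^d`, obtained by normalising the surface measure on the unit sphere and scaling. -/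
noncomputable def sphereUniform (d : ℕ) (a : ℝ) : Measure (EuclideanSpace ℝ (Fin d)) :=
  Measure.map (fun x => a • x)
    ((((MeasureTheory.volume : Measure (EuclideanSpace ℝ (Fin d))).toSphere Set.univ)⁻¹) •
      Measure.map Subtype.val
        ((MeasureTheory.volume : Measure (EuclideanSpace ℝ (Fin d))).toSphere))

/-!
Write `I_t(m,m)` as `∫₀ᵗ (s(1-s))ⁿ ds / B` with `n = m - 1`, where by the symmetry
`s ↦ 1 - s` the Beta constant is `B = 2 ∫₀^{1/2} (s(1-s))ⁿ ds`. Substituting `s = 2tu` maps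
`[0, 1/2]` onto `[0, t]`, and for `t, u ∈ [0, 1/2]` one has `2tu(1 - 2tu) ≤ 4t(1-t) · u(1-u)`.
Hence `∫₀ᵗ (s(1-s))ⁿ ds ≤ 2t (4t(1-t))ⁿ ∫₀^{1/2} (u(1-u))ⁿ du`, and `2t ≤ 1`.
-/

open intervalIntegral

lemma integral_zero_one_eq_two_mul_integral_zero_half {f : ℝ → ℝ}
    (hf : IntervalIntegrable f volume 0 1) (hsymm : ∀ s, f (1 - s) = f s) :
    ∫ s in (0:ℝ)..1, f s = 2 * ∫ s in (0:ℝ)..(1/2), f s := by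
  have hleft : IntervalIntegrable f volume 0 (1/2) :=
    hf.mono_set (uIcc_subset_uIcc left_mem_uIcc (by simp [uIcc_of_le]; norm_num))
  have hright : IntervalIntegrable f volume (1/2) 1 :=
    hf.mono_set (uIcc_subset_uIcc (by simp [uIcc_of_le]; norm_num) right_mem_uIcc)
  have hreflect : ∫ s in (1/2:ℝ)..1, f s = ∫ s in (0:ℝ)..(1/2), f s := by
    have h := integral_comp_sub_left (a := (0:ℝ)) (b := 1/2) f 1
    simp only [hsymm] at h
    norm_num at h
    exact h.symm
  rw [← integral_add_adjacent_intervals hleft hright, hreflect]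
  ring

lemma integral_rpow_natCast_sub_one (n : ℕ) (a b : ℝ) :
    ∫ s in a..b, s ^ (((n + 1 : ℕ) : ℝ) - 1) * (1 - s) ^ (((n + 1 : ℕ) : ℝ) - 1)
      = ∫ s in a..b, (s * (1 - s)) ^ n := by
  simp only [Nat.cast_succ, add_sub_cancel_right, rpow_natCast, mul_pow]

lemma betaFun_natCast_succ (n : ℕ) :
    betaFun (n + 1 : ℕ) (n + 1 : ℕ) = 2 * ∫ s in (0:ℝ)..(1/2), (s * (1 - s)) ^ n := by
  rw [betaFun, integral_rpow_natCast_sub_one]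
  exact integral_zero_one_eq_two_mul_integral_zero_half
    (by apply Continuous.intervalIntegrable; fun_prop) (fun s => by ring)

lemma integral_zero_half_pow_mul_one_sub_pos (n : ℕ) :
    0 < ∫ s in (0:ℝ)..(1/2), (s * (1 - s)) ^ n := by
  refine intervalIntegral_pos_of_pos_on ?_ (fun s hs => ?_) (by norm_num)
  · apply Continuous.intervalIntegrable; fun_prop
  · exact pow_pos (mul_pos hs.1 (by linarith [hs.2])) n

lemma mul_one_sub_two_mul_mul_le {t u : ℝ} (ht : t ∈ Icc (0:ℝ) (1/2))
    (hu : u ∈ Icc (0:ℝ) (1/2)) :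
    2 * t * u * (1 - 2 * t * u) ≤ 4 * t * (1 - t) * (u * (1 - u)) := by
  obtain ⟨ht0, ht2⟩ := ht
  obtain ⟨hu0, hu2⟩ := hu
  -- the difference is `2tu (1 - 2t)(1 - 2u)`
  nlinarith [mul_nonneg (mul_nonneg ht0 hu0)
    (mul_nonneg (by linarith : (0:ℝ) ≤ 1 - 2 * t) (by linarith : (0:ℝ) ≤ 1 - 2 * u))]

lemma integral_pow_mul_one_sub_le (n : ℕ) {t : ℝ} (ht : t ∈ Icc (0:ℝ) (1/2)) :
    ∫ s in (0:ℝ)..t, (s * (1 - s)) ^ n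
      ≤ 2 * t * (4 * t * (1 - t)) ^ n * ∫ u in (0:ℝ)..(1/2), (u * (1 - u)) ^ n := by
  set F : ℝ → ℝ := fun s => (s * (1 - s)) ^ n
  rcases ht.1.eq_or_lt with rfl | htpos
  · simp
  have hsubst : ∫ s in (0:ℝ)..t, F s = 2 * t * ∫ u in (0:ℝ)..(1/2), F (2 * t * u) := by
    rw [integral_comp_mul_left F (by positivity : 2 * t ≠ 0), mul_zero,
      show 2 * t * (1/2) = t by ring, smul_eq_mul, ← mul_assoc,
      mul_inv_cancel₀ (by positivity), one_mul]
  have hpointwise : ∀ u ∈ Icc (0:ℝ) (1/2), F (2 * t * u) ≤ (4 * t * (1 - t)) ^ n * F u := by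
    intro u hu
    rw [← mul_pow]
    exact pow_le_pow_left₀ (mul_nonneg (by nlinarith [hu.1]) (by nlinarith [hu.2, ht.2]))
      (mul_one_sub_two_mul_mul_le ht hu) n
  have hmono : ∫ u in (0:ℝ)..(1/2), F (2 * t * u)
      ≤ (4 * t * (1 - t)) ^ n * ∫ u in (0:ℝ)..(1/2), F u := by
    rw [← intervalIntegral.integral_const_mul]
    exact integral_mono_on (by norm_num) (by apply Continuous.intervalIntegrable; fun_prop)
      (by apply Continuous.intervalIntegrable; fun_prop) hpointwise
  rw [hsubst, mul_assoc (2 * t)]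
  exact mul_le_mul_of_nonneg_left hmono (by positivity)

/-- For integer `m ≥ 1` and `t ∈ [0,1/2]`,
`I_t(m,m) ≤ (1/2)·(4t(1-t))^{m-1}`. -/
theorem stmt13 (m : ℕ) (hm : 1 ≤ m) (t : ℝ) (ht : t ∈ Set.Icc (0:ℝ) (1/2)) :
    regIncBeta (m:ℝ) (m:ℝ) t ≤ (1/2) * (4*t*(1 - t)) ^ (m - 1) := by
  obtain ⟨n, rfl⟩ := Nat.exists_eq_add_of_le' hm
  have hbase : 0 ≤ 4 * t * (1 - t) := by nlinarith [ht.1, ht.2]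
  rw [Nat.add_sub_cancel, regIncBeta, betaFun_natCast_succ]
  split_ifs with htle ht1
  · positivity
  · linarith [ht.2]
  have hhalf := integral_zero_half_pow_mul_one_sub_pos n
  rw [div_le_iff₀ (by positivity), integral_rpow_natCast_sub_one]
  calc ∫ s in (0:ℝ)..t, (s * (1 - s)) ^ n
      ≤ 2 * t * (4 * t * (1 - t)) ^ n * ∫ u in (0:ℝ)..(1/2), (u * (1 - u)) ^ n :=
        integral_pow_mul_one_sub_le n ht
    _ ≤ 1 * (4 * t * (1 - t)) ^ n * ∫ u in (0:ℝ)..(1/2), (u * (1 - u)) ^ n := by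
        gcongr; linarith [ht.2]
    _ = 1/2 * (4 * t * (1 - t)) ^ n * (2 * ∫ u in (0:ℝ)..(1/2), (u * (1 - u)) ^ n) := by ring
end

section
/- Let δ ≥ 1 be a real number and δ' = ⌊δ⌋ ≥ 1. Then for all t ∈ [0, 1/2], I_t(δ, δ) ≤ I_t(δ', δ') ≤ t^{δ'} [4(1-t)]^{δ'-1}. -/
open MeasureTheory Real Set
open scoped ENNReal NNReal

/-! On `[0,1]` the integrand of `I(b,b)` is `(s(1-s))^(b-a)` times that of `I(a,a)`, a factor that
increases on `[0,1/2]`; by the symmetry `s ↦ 1-s` this moves mass from the tails `[0,t] ∪ [1-t,1]`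
into `[t,1-t]`, so `a ↦ I_t(a,a)` is antitone on `[1,∞)`. For an integer `n = p+1`, `I_t(n,n)` is
the binomial tail `P(Bin(2p+1,t) ≥ p+1)`; for `t ≤ 1-t` each of its terms is at most
`C(2p+1,k) t^(p+1) (1-t)^p`, and the upper half of the binomial coefficients sums to `4^p`. -/

lemma integral_zero_one_eq_of_symm {f : ℝ → ℝ} {t : ℝ} (hf : ∀ s, f (1 - s) = f s)
    (hint : IntervalIntegrable f volume 0 1) (ht0 : 0 ≤ t) (ht : t ≤ 1 / 2) :
    ∫ s in (0:ℝ)..1, f s = 2 * (∫ s in (0:ℝ)..t, f s) + ∫ s in t..(1 - t), f s := by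
  have hsub : ∀ {c d : ℝ}, 0 ≤ c → c ≤ d → d ≤ 1 → IntervalIntegrable f volume c d :=
    fun hc hcd hd => hint.mono_set (by
      rw [uIcc_of_le hcd, uIcc_of_le zero_le_one]; exact Icc_subset_Icc hc hd)
  have hreflect : ∫ s in (1 - t)..1, f s = ∫ s in (0:ℝ)..t, f s := by
    simpa [hf] using (intervalIntegral.integral_comp_sub_left f 1 (a := 0) (b := t)).symm
  rw [← intervalIntegral.integral_add_adjacent_intervals (b := 1 - t)
      (hsub le_rfl (by linarith) (by linarith)) (hsub (by linarith) (by linarith) le_rfl),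
    ← intervalIntegral.integral_add_adjacent_intervals (b := t)
      (hsub le_rfl ht0 (by linarith)) (hsub ht0 (by linarith) (by linarith)), hreflect]
  ring

lemma div_two_mul_add_le_div_two_mul_add {A A' M M' c : ℝ} (hA : 0 < A) (hA' : 0 < A')
    (hM : 0 ≤ M) (hA'A : A' ≤ c * A) (hMM' : c * M ≤ M') :
    A' / (2 * A' + M') ≤ A / (2 * A + M) := by
  have hc : 0 ≤ c := nonneg_of_mul_nonneg_left (hA'.le.trans hA'A) hA
  rw [div_le_div_iff₀ (by nlinarith) (by linarith)]
  nlinarith [mul_le_mul_of_nonneg_right hA'A hM, mul_le_mul_of_nonneg_left hMM' hA.le]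

noncomputable def symmBetaIntegrand (a s : ℝ) : ℝ := s ^ (a - 1) * (1 - s) ^ (a - 1)

namespace symmBetaIntegrand

variable {a b s : ℝ}

lemma symm (a s : ℝ) : symmBetaIntegrand a (1 - s) = symmBetaIntegrand a s := by
  rw [symmBetaIntegrand, symmBetaIntegrand, sub_sub_cancel, mul_comm]

lemma pos (hs : s ∈ Ioo (0:ℝ) 1) : 0 < symmBetaIntegrand a s :=
  mul_pos (rpow_pos_of_pos hs.1 _) (rpow_pos_of_pos (sub_pos.2 hs.2) _)

lemma nonneg (hs : s ∈ Icc (0:ℝ) 1) : 0 ≤ symmBetaIntegrand a s :=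
  mul_nonneg (rpow_nonneg hs.1 _) (rpow_nonneg (sub_nonneg.2 hs.2) _)

lemma continuousOn (ha : 1 ≤ a) : ContinuousOn (symmBetaIntegrand a) (Icc 0 1) :=
  (continuousOn_id.rpow_const fun _ _ => Or.inr (by linarith)).mul
    ((continuousOn_const.sub continuousOn_id).rpow_const fun _ _ => Or.inr (by linarith))

lemma intervalIntegrable (ha : 1 ≤ a) {c d : ℝ} (hc : 0 ≤ c) (hcd : c ≤ d) (hd : d ≤ 1) :
    IntervalIntegrable (symmBetaIntegrand a) volume c d :=
  ((continuousOn ha).mono (by rw [uIcc_of_le hcd]; exact Icc_subset_Icc hc hd)).intervalIntegrable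

lemma eq_rpow_mul (ha : 1 ≤ a) (hab : a ≤ b) (hs : s ∈ Icc (0:ℝ) 1) :
    symmBetaIntegrand b s = (s * (1 - s)) ^ (b - a) * symmBetaIntegrand a s := by
  have hs' : 0 ≤ 1 - s := sub_nonneg.2 hs.2
  have hsplit : b - 1 = (b - a) + (a - 1) := by ring
  rw [symmBetaIntegrand, symmBetaIntegrand, hsplit,
    rpow_add_of_nonneg hs.1 (by linarith) (by linarith),
    rpow_add_of_nonneg hs' (by linarith) (by linarith), mul_rpow hs.1 hs']
  ring

lemma le_rpow_mul (ha : 1 ≤ a) (hab : a ≤ b) (hs : s ∈ Icc (0:ℝ) 1) {u : ℝ}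
    (hsu : s * (1 - s) ≤ u) : symmBetaIntegrand b s ≤ u ^ (b - a) * symmBetaIntegrand a s := by
  rw [eq_rpow_mul ha hab hs]
  exact mul_le_mul_of_nonneg_right
    (rpow_le_rpow (mul_nonneg hs.1 (sub_nonneg.2 hs.2)) hsu (by linarith)) (nonneg hs)

lemma rpow_mul_le (ha : 1 ≤ a) (hab : a ≤ b) (hs : s ∈ Icc (0:ℝ) 1) {u : ℝ} (hu : 0 ≤ u)
    (hus : u ≤ s * (1 - s)) : u ^ (b - a) * symmBetaIntegrand a s ≤ symmBetaIntegrand b s := by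
  rw [eq_rpow_mul ha hab hs]
  exact mul_le_mul_of_nonneg_right (rpow_le_rpow hu hus (by linarith)) (nonneg hs)

end symmBetaIntegrand

lemma regIncBeta_self_eq_div {a t : ℝ} (ht : t ∈ Ioo (0:ℝ) 1) :
    regIncBeta a a t = (∫ s in (0:ℝ)..t, symmBetaIntegrand a s) /
      ∫ s in (0:ℝ)..1, symmBetaIntegrand a s := by
  rw [regIncBeta, if_neg (not_le.2 ht.1), if_neg (not_le.2 ht.2)]
  rfl

theorem antitoneOn_regIncBeta_self {t : ℝ} (ht : t ≤ 1 / 2) :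
    AntitoneOn (fun a => regIncBeta a a t) (Ici 1) := by
  intro a ha b hb hab
  simp only [mem_Ici] at ha hb
  rcases le_or_gt t 0 with ht0 | ht0
  · simp [regIncBeta, ht0]
  have ht1 : t ∈ Ioo (0:ℝ) 1 := ⟨ht0, by linarith⟩
  set c := (t * (1 - t)) ^ (b - a)
  have htail : (∫ s in (0:ℝ)..t, symmBetaIntegrand b s) ≤
      c * ∫ s in (0:ℝ)..t, symmBetaIntegrand a s := by
    rw [← intervalIntegral.integral_const_mul]
    exact intervalIntegral.integral_mono_on ht0.le
      (symmBetaIntegrand.intervalIntegrable hb le_rfl ht0.le ht1.2.le)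
      ((symmBetaIntegrand.intervalIntegrable ha le_rfl ht0.le ht1.2.le).const_mul c)
      fun s hs => symmBetaIntegrand.le_rpow_mul ha hab ⟨hs.1, by linarith [hs.2]⟩
        (by nlinarith [hs.2])
  have hmiddle : c * (∫ s in t..(1 - t), symmBetaIntegrand a s) ≤
      ∫ s in t..(1 - t), symmBetaIntegrand b s := by
    rw [← intervalIntegral.integral_const_mul]
    exact intervalIntegral.integral_mono_on (by linarith)
      ((symmBetaIntegrand.intervalIntegrable ha ht0.le (by linarith) (by linarith)).const_mul c)
      (symmBetaIntegrand.intervalIntegrable hb ht0.le (by linarith) (by linarith))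
      fun s hs => symmBetaIntegrand.rpow_mul_le ha hab ⟨by linarith [hs.1], by linarith [hs.2]⟩
        (mul_nonneg ht0.le (by linarith)) (by nlinarith [hs.1, hs.2])
  have htail_pos : ∀ x, 1 ≤ x → 0 < ∫ s in (0:ℝ)..t, symmBetaIntegrand x s := fun x hx =>
    intervalIntegral.intervalIntegral_pos_of_pos_on
      (symmBetaIntegrand.intervalIntegrable hx le_rfl ht0.le ht1.2.le)
      (fun s hs => symmBetaIntegrand.pos ⟨hs.1, hs.2.trans ht1.2⟩) ht0
  have hsplit : ∀ x, 1 ≤ x → ∫ s in (0:ℝ)..1, symmBetaIntegrand x s =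
      2 * (∫ s in (0:ℝ)..t, symmBetaIntegrand x s) + ∫ s in t..(1 - t), symmBetaIntegrand x s :=
    fun x hx => integral_zero_one_eq_of_symm (symmBetaIntegrand.symm x)
      (symmBetaIntegrand.intervalIntegrable hx le_rfl zero_le_one le_rfl) ht0.le ht
  simp only [regIncBeta_self_eq_div ht1, hsplit a ha, hsplit b hb]
  exact div_two_mul_add_le_div_two_mul_add (htail_pos a ha) (htail_pos b hb)
    (intervalIntegral.integral_nonneg (by linarith)
      fun s hs => symmBetaIntegrand.nonneg ⟨by linarith [hs.1], by linarith [hs.2]⟩)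
    htail hmiddle

noncomputable def binomialTail (m n : ℕ) (x : ℝ) : ℝ :=
  ∑ k ∈ Finset.Icc n m, (m.choose k : ℝ) * x ^ k * (1 - x) ^ (m - k)

noncomputable def binomialTailDeriv (m n : ℕ) (x : ℝ) : ℝ :=
  ((n * m.choose n : ℕ) : ℝ) * x ^ (n - 1) * (1 - x) ^ (m - n)

lemma continuous_binomialTailDeriv (m n : ℕ) : Continuous (binomialTailDeriv m n) := by
  unfold binomialTailDeriv; fun_prop

lemma hasDerivAt_binomial_term (m k : ℕ) (x : ℝ) :
    HasDerivAt (fun x : ℝ => (m.choose k : ℝ) * x ^ k * (1 - x) ^ (m - k))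
      (binomialTailDeriv m k x - binomialTailDeriv m (k + 1) x) x := by
  have hderiv := ((hasDerivAt_pow k x).const_mul (m.choose k : ℝ)).fun_mul
    (((hasDerivAt_id x).const_sub 1).pow (m - k))
  refine hderiv.congr_deriv ?_
  have hchoose : ((k + 1) * m.choose (k + 1) : ℕ) = (m.choose k * (m - k) : ℕ) := by
    rw [mul_comm]; exact Nat.choose_succ_right_eq m k
  simp only [binomialTailDeriv, hchoose, Nat.add_sub_cancel, Nat.sub_add_eq, Pi.pow_apply, id]
  push_cast
  ring

lemma hasDerivAt_binomialTail {m n : ℕ} (hnm : n ≤ m) (x : ℝ) :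
    HasDerivAt (binomialTail m n) (binomialTailDeriv m n x) x := by
  have hlast : binomialTailDeriv m (m + 1) x = 0 := by
    simp [binomialTailDeriv, Nat.choose_succ_self]
  have htelescope : ∑ k ∈ Finset.Icc n m,
      (binomialTailDeriv m k x - binomialTailDeriv m (k + 1) x) = binomialTailDeriv m n x := by
    calc _ = -∑ k ∈ Finset.Icc n m, (binomialTailDeriv m (k + 1) x - binomialTailDeriv m k x) := by
          simp only [← Finset.sum_neg_distrib, neg_sub]
      _ = _ := by rw [Finset.sum_Icc_sub hnm (fun k => binomialTailDeriv m k x), hlast]; ring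
  have hsum := HasDerivAt.fun_sum fun k (_ : k ∈ Finset.Icc n m) => hasDerivAt_binomial_term m k x
  rw [htelescope] at hsum
  exact hsum

lemma binomialTail_zero {m n : ℕ} (hn : 1 ≤ n) : binomialTail m n 0 = 0 :=
  Finset.sum_eq_zero fun k hk => by
    simp [zero_pow (by have := (Finset.mem_Icc.1 hk).1; omega : k ≠ 0)]

lemma binomialTail_one {m n : ℕ} (hnm : n ≤ m) : binomialTail m n 1 = 1 := by
  rw [binomialTail, Finset.sum_eq_single_of_mem m (Finset.mem_Icc.2 ⟨hnm, le_rfl⟩)]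
  · simp
  · intro k hk hkm
    simp [zero_pow (by have := (Finset.mem_Icc.1 hk).2; omega : m - k ≠ 0)]

lemma integral_binomialTailDeriv {m n : ℕ} (hn : 1 ≤ n) (hnm : n ≤ m) (x : ℝ) :
    ∫ s in (0:ℝ)..x, binomialTailDeriv m n s = binomialTail m n x := by
  rw [intervalIntegral.integral_eq_sub_of_hasDerivAt (fun s _ => hasDerivAt_binomialTail hnm s)
    ((continuous_binomialTailDeriv m n).intervalIntegrable 0 x), binomialTail_zero hn, sub_zero]

theorem regIncBeta_natCast_eq_binomialTail (p q : ℕ) {x : ℝ} (hx : x ∈ Ioo (0:ℝ) 1) :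
    regIncBeta (p + 1) (q + 1) x = binomialTail (p + q + 1) (p + 1) x := by
  have hK : (0:ℝ) < (((p + 1) * (p + q + 1).choose (p + 1) : ℕ) : ℝ) := by
    have := Nat.choose_pos (by omega : p + 1 ≤ p + q + 1)
    positivity
  have hintegrand : (fun s : ℝ => s ^ ((p:ℝ) + 1 - 1) * (1 - s) ^ ((q:ℝ) + 1 - 1)) =
      fun s => binomialTailDeriv (p + q + 1) (p + 1) s /
        (((p + 1) * (p + q + 1).choose (p + 1) : ℕ) : ℝ) := by
    ext s
    rw [binomialTailDeriv, show p + q + 1 - (p + 1) = q by omega, Nat.add_sub_cancel,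
      add_sub_cancel_right, add_sub_cancel_right, rpow_natCast, rpow_natCast]
    field_simp
  rw [regIncBeta, if_neg (not_le.2 hx.1), if_neg (not_le.2 hx.2), betaFun, hintegrand,
    intervalIntegral.integral_div, intervalIntegral.integral_div,
    integral_binomialTailDeriv (by omega) (by omega),
    integral_binomialTailDeriv (by omega) (by omega), binomialTail_one (by omega)]
  field_simp

lemma binomialTail_le {m n : ℕ} {x : ℝ} (hx0 : 0 ≤ x) (hx : x ≤ 1 - x) :
    binomialTail m n x ≤
      (∑ k ∈ Finset.Icc n m, (m.choose k : ℝ)) * (x ^ n * (1 - x) ^ (m - n)) := by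
  rw [binomialTail, Finset.sum_mul]
  refine Finset.sum_le_sum fun k hk => ?_
  obtain ⟨hnk, hkm⟩ := Finset.mem_Icc.1 hk
  rw [mul_assoc]
  refine mul_le_mul_of_nonneg_left ?_ (Nat.cast_nonneg _)
  calc x ^ k * (1 - x) ^ (m - k) = x ^ n * (x ^ (k - n) * (1 - x) ^ (m - k)) := by
        rw [← mul_assoc, ← pow_add, Nat.add_sub_cancel' hnk]
    _ ≤ x ^ n * ((1 - x) ^ (k - n) * (1 - x) ^ (m - k)) := by
        gcongr
        exact pow_nonneg (hx0.trans hx) _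
    _ = x ^ n * (1 - x) ^ (m - n) := by
        rw [← pow_add]; congr 2; omega

lemma sum_Icc_choose_upper_half (p : ℕ) :
    ∑ k ∈ Finset.Icc (p + 1) (2 * p + 1), (2 * p + 1).choose k = 4 ^ p := by
  have htotal := Nat.sum_range_choose (2 * p + 1)
  rw [← Finset.sum_range_add_sum_Ico _ (by omega : p + 1 ≤ 2 * p + 1 + 1),
    Nat.sum_range_choose_halfway, Finset.Ico_add_one_right_eq_Icc, pow_succ, pow_mul] at htotal
  norm_num at htotal
  omega

theorem regIncBeta_natCast_self_le {n : ℕ} (hn : 1 ≤ n) {t : ℝ} (ht0 : 0 ≤ t) (ht : t ≤ 1 / 2) :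
    regIncBeta n n t ≤ t ^ n * (4 * (1 - t)) ^ (n - 1) := by
  obtain ⟨p, rfl⟩ : ∃ p, n = p + 1 := ⟨n - 1, by omega⟩
  rcases ht0.eq_or_lt with rfl | ht0
  · simp [regIncBeta]
  have hsum : (∑ k ∈ Finset.Icc (p + 1) (2 * p + 1), ((2 * p + 1).choose k : ℝ)) = 4 ^ p := by
    exact_mod_cast sum_Icc_choose_upper_half p
  calc regIncBeta ↑(p + 1) ↑(p + 1) t = binomialTail (2 * p + 1) (p + 1) t := by
        push_cast
        rw [regIncBeta_natCast_eq_binomialTail p p ⟨ht0, by linarith⟩, ← two_mul]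
    _ ≤ 4 ^ p * (t ^ (p + 1) * (1 - t) ^ (2 * p + 1 - (p + 1))) := by
        rw [← hsum]; exact binomialTail_le ht0.le (by linarith)
    _ = t ^ (p + 1) * (4 * (1 - t)) ^ (p + 1 - 1) := by
        rw [show 2 * p + 1 - (p + 1) = p by omega, Nat.add_sub_cancel, mul_pow]; ring

/-- For real `δ ≥ 1`, `δ' = ⌊δ⌋ ≥ 1`, and `t ∈ [0,1/2]`,
`I_t(δ,δ) ≤ I_t(δ',δ') ≤ t^{δ'} (4(1-t))^{δ'-1}`. -/
theorem stmt14 (δ : ℝ) (hδ : 1 ≤ δ) (t : ℝ) (ht : t ∈ Set.Icc (0:ℝ) (1/2)) :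
    regIncBeta δ δ t ≤ regIncBeta (⌊δ⌋₊ : ℝ) (⌊δ⌋₊ : ℝ) t ∧
    regIncBeta (⌊δ⌋₊ : ℝ) (⌊δ⌋₊ : ℝ) t ≤ t ^ (⌊δ⌋₊) * (4*(1 - t)) ^ (⌊δ⌋₊ - 1) := by
  have hfloor : 1 ≤ ⌊δ⌋₊ := Nat.le_floor (by exact_mod_cast hδ)
  refine ⟨antitoneOn_regIncBeta_self ht.2 ?_ hδ (Nat.floor_le (by linarith)),
    regIncBeta_natCast_self_le hfloor ht.1 ht.2⟩
  exact mem_Ici.2 (by exact_mod_cast hfloor)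
end

section
/- Let d ≥ 3, δ = (d-1)/2, δ' = ⌊δ⌋, n ≥ 2, and let κ_{n,d} ∈ (0, 1/2] satisfy I_{κ_{n,d}}(δ,δ) = 1/n. Then (1/2)[1 - √(1 - (2/n)^{1/(δ'-1)})] ≤ κ_{n,d} ≤ (1/2)[1 - √(max(0, 1 - 4 c_d n^{-1/δ}))], where c_d = [δ B(δ,δ)]^{1/δ}. -/
open MeasureTheory Real Set
open scoped ENNReal NNReal

/-!
Write `B_x(δ,δ) = ∫₀ˣ (s(1-s))^{δ-1} ds`, so that `B_κ(δ,δ) = B(δ,δ)/n`.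

Upper bound: on `[0,κ]` the factor `(1-s)^{δ-1}` is at least `(1-κ)^{δ-1}`, whence
`B_κ(δ,δ) ≥ (κ(1-κ))^δ/δ`; solving for `κ(1-κ)` gives the bound.

Lower bound: with `c = 4κ(1-κ)`, the substitution `s = φ(u)` defined by
`φ(1-φ) = c·u(1-u)`, `φ(0) = 0`, maps `[0,1/2]` onto `[0,κ]` with `φ' ≤ c`, so
`B_κ(δ,δ) ≤ c^δ B_{1/2}(δ,δ) = c^δ B(δ,δ)/2`; hence `(2/n)^{1/δ} ≤ c`, and
`(2/n)^{1/(δ'-1)} ≤ (2/n)^{1/δ}` because `δ' - 1 ≤ δ`.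
-/

/-- The incomplete Beta function `B_x(a,b)`. -/
noncomputable def incBeta (a b x : ℝ) : ℝ :=
  ∫ s in (0:ℝ)..x, s ^ (a - 1) * (1 - s) ^ (b - 1)

lemma regIncBeta_eq_incBeta_div {a b x : ℝ} (hx : x ∈ Ioo 0 1) :
    regIncBeta a b x = incBeta a b x / betaFun a b := by
  rw [regIncBeta, if_neg (not_le.2 hx.1), if_neg (not_le.2 hx.2), incBeta]

lemma continuous_rpow_sub_one {a : ℝ} (ha : 1 ≤ a) : Continuous fun s : ℝ => s ^ (a - 1) :=
  continuous_id.rpow_const fun _ => Or.inr (by linarith)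

lemma continuous_betaIntegrand {a b : ℝ} (ha : 1 ≤ a) (hb : 1 ≤ b) :
    Continuous fun s : ℝ => s ^ (a - 1) * (1 - s) ^ (b - 1) :=
  (continuous_rpow_sub_one ha).mul
    ((continuous_rpow_sub_one hb).comp (continuous_const.sub continuous_id))

lemma betaFun_pos {a b : ℝ} (ha : 1 ≤ a) (hb : 1 ≤ b) : 0 < betaFun a b :=
  intervalIntegral.intervalIntegral_pos_of_pos_on
    ((continuous_betaIntegrand ha hb).intervalIntegrable 0 1)
    (fun _ hx => mul_pos (rpow_pos_of_pos hx.1 _) (rpow_pos_of_pos (by linarith [hx.2]) _))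
    one_pos

lemma incBeta_half_self {δ : ℝ} (hδ : 1 ≤ δ) : incBeta δ δ (1/2) = betaFun δ δ / 2 := by
  have hcont := continuous_betaIntegrand hδ hδ
  have hreflect : incBeta δ δ (1/2) = ∫ s in (1/2:ℝ)..1, s ^ (δ - 1) * (1 - s) ^ (δ - 1) := by
    calc incBeta δ δ (1/2)
        = ∫ s in (0:ℝ)..1/2, (1 - s) ^ (δ - 1) * (1 - (1 - s)) ^ (δ - 1) := by
          rw [incBeta]
          exact intervalIntegral.integral_congr fun s _ => by simp only [sub_sub_cancel, mul_comm]
      _ = ∫ s in (1/2:ℝ)..1, s ^ (δ - 1) * (1 - s) ^ (δ - 1) := by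
          rw [intervalIntegral.integral_comp_sub_left
            (fun s : ℝ => s ^ (δ - 1) * (1 - s) ^ (δ - 1))]
          norm_num
  have hsplit := intervalIntegral.integral_add_adjacent_intervals
    (hcont.intervalIntegrable (μ := volume) 0 (1/2)) (hcont.intervalIntegrable (1/2) 1)
  rw [betaFun, ← hsplit, ← incBeta, ← hreflect]
  ring

lemma rpow_div_mul_le_incBeta {a b x : ℝ} (ha : 0 < a) (hb : 1 ≤ b) (hx0 : 0 ≤ x)
    (hx1 : x ≤ 1) : x ^ a / a * (1 - x) ^ (b - 1) ≤ incBeta a b x := by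
  have hcont : Continuous fun s : ℝ => (1 - s) ^ (b - 1) :=
    (continuous_rpow_sub_one hb).comp (continuous_const.sub continuous_id)
  have hint : IntervalIntegrable (fun s : ℝ => s ^ (a - 1)) volume 0 x :=
    intervalIntegral.intervalIntegrable_rpow' (by linarith)
  calc x ^ a / a * (1 - x) ^ (b - 1) = ∫ s in (0:ℝ)..x, s ^ (a - 1) * (1 - x) ^ (b - 1) := by
        rw [intervalIntegral.integral_mul_const, integral_rpow (Or.inl (by linarith)),
          sub_add_cancel, zero_rpow ha.ne']
        ring
    _ ≤ incBeta a b x := by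
      refine intervalIntegral.integral_mono_on hx0 (hint.mul_const _)
        (hint.mul_continuousOn hcont.continuousOn) fun s hs => ?_
      exact mul_le_mul_of_nonneg_left (rpow_le_rpow (by linarith) (by linarith [hs.2])
        (by linarith)) (rpow_nonneg hs.1 _)

section Substitution

variable {c : ℝ}

/-- The root of `s(1-s) = c·u(1-u)` in `[0, 1/2]`. -/
noncomputable def betaSubst (c u : ℝ) : ℝ := (1 - √(1 - 4 * c * (u * (1 - u)))) / 2

noncomputable def betaSubstDeriv (c u : ℝ) : ℝ := c * (1 - 2 * u) / √(1 - 4 * c * (u * (1 - u)))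

lemma one_sub_four_mul_mul_one_sub_pos (hc0 : 0 ≤ c) (hc1 : c < 1) (u : ℝ) :
    0 < 1 - 4 * c * (u * (1 - u)) := by
  nlinarith [mul_nonneg hc0 (sq_nonneg (1 - 2 * u))]

lemma betaSubst_zero : betaSubst c 0 = 0 := by
  simp [betaSubst]

lemma betaSubst_half {κ : ℝ} (hκ : κ ≤ 1/2) : betaSubst (4 * κ * (1 - κ)) (1/2) = κ := by
  rw [betaSubst, show 1 - 4 * (4 * κ * (1 - κ)) * (1/2 * (1 - 1/2)) = (1 - 2 * κ) ^ 2 by ring,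
    sqrt_sq (by linarith)]
  ring

lemma betaSubst_mul_one_sub (hc0 : 0 ≤ c) (hc1 : c < 1) (u : ℝ) :
    betaSubst c u * (1 - betaSubst c u) = c * (u * (1 - u)) := by
  have hsq := sq_sqrt (one_sub_four_mul_mul_one_sub_pos hc0 hc1 u).le
  rw [betaSubst]
  linear_combination (-1/4 : ℝ) * hsq

lemma hasDerivAt_betaSubst (hc0 : 0 ≤ c) (hc1 : c < 1) (u : ℝ) :
    HasDerivAt (betaSubst c) (betaSubstDeriv c u) u := by
  have hpos := one_sub_four_mul_mul_one_sub_pos hc0 hc1 u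
  have hrad : HasDerivAt (fun u => 1 - 4 * c * (u * (1 - u))) (-(4 * c) * (1 - 2 * u)) u := by
    have := (((hasDerivAt_id u).mul ((hasDerivAt_const u 1).sub (hasDerivAt_id u))).const_mul
      (4 * c)).const_sub 1
    exact this.congr_deriv (by simp only [id_eq, Pi.sub_apply]; ring)
  refine ((hrad.sqrt hpos.ne').const_sub 1 |>.div_const 2).congr_deriv ?_
  rw [betaSubstDeriv]
  field_simp
  ring

lemma continuous_betaSubstDeriv (hc0 : 0 ≤ c) (hc1 : c < 1) : Continuous (betaSubstDeriv c) :=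
  Continuous.div (by fun_prop) (by fun_prop) fun u =>
    (sqrt_pos.2 (one_sub_four_mul_mul_one_sub_pos hc0 hc1 u)).ne'

lemma betaSubst_mem_Icc {u : ℝ} (hc0 : 0 ≤ c) (hu : u ∈ Icc (0:ℝ) 1) :
    betaSubst c u ∈ Icc (0:ℝ) (1/2) := by
  have hle : √(1 - 4 * c * (u * (1 - u))) ≤ 1 :=
    sqrt_le_one.2 (by nlinarith [mul_nonneg hc0 (mul_nonneg hu.1 (sub_nonneg.2 hu.2))])
  constructor <;> rw [betaSubst] <;> linarith [sqrt_nonneg (1 - 4 * c * (u * (1 - u)))]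

lemma betaSubstDeriv_le {u : ℝ} (hc0 : 0 ≤ c) (hc1 : c < 1) (hu : u ∈ Icc (0:ℝ) (1/2)) :
    betaSubstDeriv c u ≤ c := by
  have hpos := one_sub_four_mul_mul_one_sub_pos hc0 hc1 u
  have hsq : 1 - 2 * u ≤ √(1 - 4 * c * (u * (1 - u))) :=
    le_sqrt_of_sq_le (by nlinarith [mul_nonneg (sub_nonneg.2 hc1.le) (mul_nonneg hu.1
      (by linarith [hu.2] : 0 ≤ 1 - u))])
  rw [betaSubstDeriv, div_le_iff₀ (sqrt_pos.2 hpos)]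
  nlinarith [hu.2]

lemma betaIntegrand_betaSubst_mul_deriv_le {δ u : ℝ} (hδ : 0 < δ) (hc0 : 0 ≤ c) (hc1 : c < 1)
    (hu : u ∈ Icc (0:ℝ) (1/2)) :
    (betaSubst c u) ^ (δ - 1) * (1 - betaSubst c u) ^ (δ - 1) * betaSubstDeriv c u
      ≤ c ^ δ * (u ^ (δ - 1) * (1 - u) ^ (δ - 1)) := by
  have hu1 : u ∈ Icc (0:ℝ) 1 := ⟨hu.1, by linarith [hu.2]⟩
  have hφ := betaSubst_mem_Icc hc0 hu1
  have huu : 0 ≤ u * (1 - u) := mul_nonneg hu1.1 (sub_nonneg.2 hu1.2)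
  have hcomp : (betaSubst c u) ^ (δ - 1) * (1 - betaSubst c u) ^ (δ - 1)
      = c ^ (δ - 1) * (u ^ (δ - 1) * (1 - u) ^ (δ - 1)) := by
    rw [← mul_rpow hφ.1 (by linarith [hφ.2]), betaSubst_mul_one_sub hc0 hc1,
      mul_rpow hc0 huu, mul_rpow hu1.1 (sub_nonneg.2 hu1.2)]
  have hg : 0 ≤ c ^ (δ - 1) * (u ^ (δ - 1) * (1 - u) ^ (δ - 1)) :=
    mul_nonneg (rpow_nonneg hc0 _) (mul_nonneg (rpow_nonneg hu1.1 _)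
      (rpow_nonneg (sub_nonneg.2 hu1.2) _))
  calc (betaSubst c u) ^ (δ - 1) * (1 - betaSubst c u) ^ (δ - 1) * betaSubstDeriv c u
      ≤ c ^ (δ - 1) * (u ^ (δ - 1) * (1 - u) ^ (δ - 1)) * c := by
        rw [hcomp]
        exact mul_le_mul_of_nonneg_left (betaSubstDeriv_le hc0 hc1 hu) hg
    _ = c ^ δ * (u ^ (δ - 1) * (1 - u) ^ (δ - 1)) := by
        rw [mul_comm _ c, ← mul_assoc, ← rpow_one_add' hc0 (by linarith : 1 + (δ - 1) ≠ 0)]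
        ring_nf

end Substitution

lemma incBeta_le_rpow_mul_incBeta_half {δ κ : ℝ} (hδ : 1 ≤ δ) (hκ0 : 0 ≤ κ) (hκ : κ ≤ 1/2) :
    incBeta δ δ κ ≤ (4 * κ * (1 - κ)) ^ δ * incBeta δ δ (1/2) := by
  rcases hκ.eq_or_lt with rfl | hκlt
  · norm_num
  set c := 4 * κ * (1 - κ)
  have hc0 : 0 ≤ c := mul_nonneg (by positivity) (by linarith)
  have hc1 : c < 1 := by nlinarith
  have hsub := intervalIntegral.integral_comp_mul_deriv (a := 0) (b := 1/2)
    (fun u _ => hasDerivAt_betaSubst hc0 hc1 u) (continuous_betaSubstDeriv hc0 hc1).continuousOn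
    (continuous_betaIntegrand hδ hδ)
  rw [betaSubst_zero, betaSubst_half hκ] at hsub
  rw [incBeta, ← hsub, incBeta, ← intervalIntegral.integral_const_mul]
  refine intervalIntegral.integral_mono_on (by norm_num) ?_ ?_ fun u hu => ?_
  · exact (((continuous_betaIntegrand hδ hδ).comp (by unfold betaSubst; fun_prop)).mul
      (continuous_betaSubstDeriv hc0 hc1)).intervalIntegrable _ _
  · exact (continuous_const.mul (continuous_betaIntegrand hδ hδ)).intervalIntegrable _ _
  exact betaIntegrand_betaSubst_mul_deriv_le (by linarith) hc0 hc1 hu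

lemma rpow_one_div_le_of_incBeta_eq {δ κ p : ℝ} (hδ : 1 ≤ δ) (hκ0 : 0 ≤ κ) (hκ : κ ≤ 1/2)
    (hp : 0 ≤ p) (h : incBeta δ δ κ = p * betaFun δ δ) : (2 * p) ^ (1/δ) ≤ 4 * κ * (1 - κ) := by
  have hB := betaFun_pos hδ hδ
  have hbound := incBeta_le_rpow_mul_incBeta_half hδ hκ0 hκ
  rw [h, incBeta_half_self hδ] at hbound
  rw [one_div, rpow_inv_le_iff_of_pos (by positivity) (mul_nonneg (by positivity) (by linarith))
    (by linarith)]
  exact le_of_mul_le_mul_right (by linarith) hB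

lemma mul_one_sub_le_of_incBeta_eq {δ κ p : ℝ} (hδ : 1 ≤ δ) (hκ0 : 0 ≤ κ) (hκ1 : κ ≤ 1)
    (h : incBeta δ δ κ = p * betaFun δ δ) : κ * (1 - κ) ≤ (δ * betaFun δ δ * p) ^ (1/δ) := by
  have hδ0 : 0 < δ := by linarith
  have hκκ : 0 ≤ κ * (1 - κ) := mul_nonneg hκ0 (sub_nonneg.2 hκ1)
  have hpow : (κ * (1 - κ)) ^ δ ≤ δ * betaFun δ δ * p :=
    calc (κ * (1 - κ)) ^ δ = κ ^ δ * (1 - κ) ^ δ := mul_rpow hκ0 (sub_nonneg.2 hκ1)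
      _ ≤ κ ^ δ * (1 - κ) ^ (δ - 1) :=
        mul_le_mul_of_nonneg_left (rpow_le_rpow_of_exponent_ge' (sub_nonneg.2 hκ1)
          (by linarith) (by linarith) (by linarith)) (rpow_nonneg hκ0 _)
      _ = δ * (κ ^ δ / δ * (1 - κ) ^ (δ - 1)) := by field_simp
      _ ≤ δ * incBeta δ δ κ := by gcongr; exact rpow_div_mul_le_incBeta hδ0 hδ hκ0 hκ1
      _ = δ * betaFun δ δ * p := by rw [h]; ring
  rwa [one_div, le_rpow_inv_iff_of_pos hκκ ((rpow_nonneg hκκ δ).trans hpow) hδ0]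

lemma half_mul_one_sub_sqrt_le {κ x : ℝ} (hx : x ≤ 4 * κ * (1 - κ)) :
    1/2 * (1 - √(1 - x)) ≤ κ := by
  have : 1 - 2 * κ ≤ √(1 - x) := le_sqrt_of_sq_le (by nlinarith)
  linarith

lemma le_half_mul_one_sub_sqrt_max {κ y : ℝ} (hκ : κ ≤ 1/2) (hy : 4 * κ * (1 - κ) ≤ y) :
    κ ≤ 1/2 * (1 - √(max 0 (1 - y))) := by
  have : √(max 0 (1 - y)) ≤ 1 - 2 * κ :=
    sqrt_le_iff.2 ⟨by linarith, max_le (sq_nonneg _) (by nlinarith)⟩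
  linarith

theorem stmt16_general (d n : ℕ) (hd5 : 5 ≤ d) (hn : 2 ≤ n)
    (δ : ℝ) (hδ : δ = ((d:ℝ) - 1)/2) (δ' : ℕ) (hδ' : δ' = ⌊δ⌋₊)
    (κ : ℝ) (hκmem : κ ∈ Set.Ioc (0:ℝ) (1/2)) (hκ : regIncBeta δ δ κ = 1/(n:ℝ)) :
    (1/2) * (1 - Real.sqrt (1 - (2/(n:ℝ)) ^ ((1:ℝ)/((δ':ℝ) - 1)))) ≤ κ ∧
    κ ≤ (1/2) * (1 - Real.sqrt (max 0
      (1 - 4 * (δ * betaFun δ δ) ^ ((1:ℝ)/δ) * (n:ℝ) ^ (-(1:ℝ)/δ)))) := by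
  obtain ⟨hκ0, hκhalf⟩ := hκmem
  have hd5' : (5:ℝ) ≤ d := by exact_mod_cast hd5
  have hδ2 : 2 ≤ δ := by rw [hδ]; linarith
  have hB : 0 < betaFun δ δ := betaFun_pos (by linarith) (by linarith)
  have hn2 : (2:ℝ) ≤ n := by exact_mod_cast hn
  have hint : incBeta δ δ κ = 1 / n * betaFun δ δ := by
    rw [← hκ, regIncBeta_eq_incBeta_div ⟨hκ0, by linarith⟩,
      div_mul_cancel₀ _ hB.ne']
  have hδ'2 : (2:ℝ) ≤ δ' := by rw [hδ']; exact_mod_cast Nat.le_floor (by exact_mod_cast hδ2)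
  have hδ'δ : (δ':ℝ) ≤ δ := hδ' ▸ Nat.floor_le (by linarith)
  constructor
  · refine half_mul_one_sub_sqrt_le ?_
    calc (2 / n : ℝ) ^ (1 / ((δ':ℝ) - 1)) ≤ (2 / n) ^ (1 / δ) :=
          rpow_le_rpow_of_exponent_ge (by positivity) ((div_le_one (by linarith)).2 hn2)
            (one_div_le_one_div_of_le (by linarith) (by linarith))
      _ = (2 * (1 / n)) ^ (1 / δ) := by rw [mul_one_div]
      _ ≤ 4 * κ * (1 - κ) :=
          rpow_one_div_le_of_incBeta_eq (by linarith) hκ0.le hκhalf (by positivity) hint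
  · refine le_half_mul_one_sub_sqrt_max hκhalf ?_
    calc 4 * κ * (1 - κ) ≤ 4 * (δ * betaFun δ δ * (1 / n)) ^ (1 / δ) := by
          rw [mul_assoc]
          exact mul_le_mul_of_nonneg_left (mul_one_sub_le_of_incBeta_eq (by linarith) hκ0.le
            (by linarith) hint) (by norm_num)
      _ = 4 * (δ * betaFun δ δ) ^ (1 / δ) * n ^ (-1 / δ) := by
          rw [mul_rpow (by positivity) (by positivity), one_div (n:ℝ), inv_rpow (by positivity), ← rpow_neg (by positivity),
            neg_div, mul_assoc]

/-- For `d ≥ 3` (the lower bound requiring `δ' = ⌊δ⌋ ≥ 2`, i.e. `d ≥ 5`),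
`δ = (d-1)/2`, `n ≥ 2`, and `κ_{n,d} ∈ (0,1/2]` with `I_{κ_{n,d}}(δ,δ) = 1/n`, one has
`(1/2)[1 - √(1-(2/n)^{1/(δ'-1)})] ≤ κ_{n,d} ≤ (1/2)[1 - √(max(0, 1 - 4 c_d n^{-1/δ}))]`
where `c_d = (δ B(δ,δ))^{1/δ}`. -/
theorem stmt16 (d n : ℕ) (hd : 3 ≤ d) (hd5 : 5 ≤ d) (hn : 2 ≤ n)
    (δ : ℝ) (hδ : δ = ((d:ℝ) - 1)/2) (δ' : ℕ) (hδ' : δ' = ⌊δ⌋₊)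
    (κ : ℝ) (hκmem : κ ∈ Set.Ioc (0:ℝ) (1/2)) (hκ : regIncBeta δ δ κ = 1/(n:ℝ)) :
    (1/2) * (1 - Real.sqrt (1 - (2/(n:ℝ)) ^ ((1:ℝ)/((δ':ℝ) - 1)))) ≤ κ ∧
    κ ≤ (1/2) * (1 - Real.sqrt (max 0
      (1 - 4 * (δ * betaFun δ δ) ^ ((1:ℝ)/δ) * (n:ℝ) ^ (-(1:ℝ)/δ)))) :=
  stmt16_general d n hd5 hn δ hδ δ' hδ' κ hκmem hκ
end

section
/- Let κ_{n,d} be the 1/n quantile of the Beta(δ,δ) distribution with δ = (d-1)/2, d ≥ 3. If n = n(d) satisfies n = C λ^d (1 + o(1)) as d → ∞ for constants λ > 1 and C > 0, then κ_{n,d} → (1/2)[1 - √(1 - 1/λ²)] as d → ∞. -/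
open MeasureTheory Real Set
open scoped ENNReal NNReal

/-!
With `p = (d - 3) / 2` we have `I_t = ∫₀ᵗ (s(1-s))^p / ∫₀¹ (s(1-s))^p`. Bounding the integrand
by its extreme values on subintervals gives, for `0 < r < t ≤ 1/2` and `0 < b < 1/2`,
`c' (4r(1-r))^p ≤ I_t ≤ c (t(1-t) / (b(1-b)))^p`, so `n I_t` tends to `0` when
`4t(1-t)λ² < 1` and to `∞` when `4t(1-t)λ² > 1`. Since `I` is monotone and `n I_κ = 1`, the
quantile is eventually squeezed around the root `(1 - √(1 - 1/λ²))/2` of `4t(1-t)λ² = 1`.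
-/

open Filter Topology

section BetaIntegral

variable {p : ℝ}

lemma continuous_rpow_mul_one_sub_rpow {q : ℝ} (hp : 0 ≤ p) (hq : 0 ≤ q) :
    Continuous fun s : ℝ => s ^ p * (1 - s) ^ q :=
  (continuous_id.rpow_const fun _ => Or.inr hp).mul
    ((continuous_const.sub continuous_id).rpow_const fun _ => Or.inr hq)

lemma integral_rpow_mul_one_sub_rpow_mono {q a b c d : ℝ} (hp : 0 ≤ p) (hq : 0 ≤ q)
    (hc : 0 ≤ c) (hca : c ≤ a) (hab : a ≤ b) (hbd : b ≤ d) (hd : d ≤ 1) :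
    ∫ s in a..b, s ^ p * (1 - s) ^ q ≤ ∫ s in c..d, s ^ p * (1 - s) ^ q :=
  intervalIntegral.integral_mono_interval hca hab hbd
    (ae_restrict_of_forall_mem measurableSet_Ioc fun _ hs =>
      mul_nonneg (Real.rpow_nonneg (hc.trans hs.1.le) p)
        (Real.rpow_nonneg (sub_nonneg.2 (hs.2.trans hd)) q))
    ((continuous_rpow_mul_one_sub_rpow hp hq).intervalIntegrable c d)

lemma integral_rpow_mul_one_sub_rpow_le {a b M : ℝ} (hp : 0 ≤ p) (ha : 0 ≤ a) (hab : a ≤ b)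
    (hb : b ≤ 1) (hM : ∀ s ∈ Icc a b, s * (1 - s) ≤ M) :
    ∫ s in a..b, s ^ p * (1 - s) ^ p ≤ (b - a) * M ^ p := by
  simpa using intervalIntegral.integral_mono_on (μ := volume) hab
    ((continuous_rpow_mul_one_sub_rpow hp hp).intervalIntegrable a b) intervalIntegrable_const
    fun s hs => by
      have hs0 : 0 ≤ s := ha.trans hs.1
      have hs1 : 0 ≤ 1 - s := by linarith [hs.2]
      rw [← Real.mul_rpow hs0 hs1]
      exact Real.rpow_le_rpow (mul_nonneg hs0 hs1) (hM s hs) hp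

lemma le_integral_rpow_mul_one_sub_rpow {a b m : ℝ} (hp : 0 ≤ p) (ha : 0 ≤ a) (hab : a ≤ b)
    (hb : b ≤ 1) (hm : 0 ≤ m) (hM : ∀ s ∈ Icc a b, m ≤ s * (1 - s)) :
    (b - a) * m ^ p ≤ ∫ s in a..b, s ^ p * (1 - s) ^ p := by
  simpa using intervalIntegral.integral_mono_on (μ := volume) hab intervalIntegrable_const
    ((continuous_rpow_mul_one_sub_rpow hp hp).intervalIntegrable a b)
    fun s hs => by
      rw [← Real.mul_rpow (ha.trans hs.1) (by linarith [hs.2])]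
      exact Real.rpow_le_rpow hm (hM s hs) hp

end BetaIntegral

section RegIncBeta

lemma regIncBeta_of_mem_Ioo {a b x : ℝ} (hx : x ∈ Ioo (0:ℝ) 1) :
    regIncBeta a b x = (∫ s in (0:ℝ)..x, s ^ (a - 1) * (1 - s) ^ (b - 1)) / betaFun a b := by
  rw [regIncBeta, if_neg hx.1.not_ge, if_neg hx.2.not_ge]

lemma regIncBeta_monotoneOn {a b : ℝ} (ha : 1 ≤ a) (hb : 1 ≤ b) :
    MonotoneOn (regIncBeta a b) (Ioo 0 1) := by
  intro x hx y hy hxy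
  have hB : 0 ≤ betaFun a b :=
    intervalIntegral.integral_nonneg zero_le_one fun s hs =>
      mul_nonneg (Real.rpow_nonneg hs.1 _) (Real.rpow_nonneg (sub_nonneg.2 hs.2) _)
  rw [regIncBeta_of_mem_Ioo hx, regIncBeta_of_mem_Ioo hy]
  exact div_le_div_of_nonneg_right (integral_rpow_mul_one_sub_rpow_mono (by linarith)
    (by linarith) le_rfl le_rfl hx.1.le hxy hy.2.le) hB

lemma regIncBeta_le {a t b : ℝ} (ha : 1 ≤ a) (ht0 : 0 < t) (ht : t ≤ 1 / 2) (hb0 : 0 < b)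
    (hb : b < 1 / 2) :
    regIncBeta a a t ≤ t / (1 / 2 - b) * (t * (1 - t) / (b * (1 - b))) ^ (a - 1) := by
  have hp : 0 ≤ a - 1 := by linarith
  have hnum :
      ∫ s in (0:ℝ)..t, s ^ (a - 1) * (1 - s) ^ (a - 1) ≤ t * (t * (1 - t)) ^ (a - 1) := by
    simpa using integral_rpow_mul_one_sub_rpow_le hp le_rfl ht0.le (by linarith)
      fun s hs => by nlinarith [hs.1, hs.2]
  have hden : (1 / 2 - b) * (b * (1 - b)) ^ (a - 1) ≤ betaFun a a :=
    (le_integral_rpow_mul_one_sub_rpow hp hb0.le hb.le (by norm_num) (by nlinarith)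
      fun s hs => by nlinarith [hs.1, hs.2]).trans
    (integral_rpow_mul_one_sub_rpow_mono hp hp le_rfl hb0.le hb.le (by norm_num) le_rfl)
  rw [regIncBeta_of_mem_Ioo ⟨ht0, by linarith⟩, Real.div_rpow (by nlinarith) (by nlinarith),
    div_mul_div_comm]
  have : 0 < t * (1 - t) := by nlinarith
  have : 0 < b * (1 - b) := by nlinarith
  exact div_le_div₀ (by positivity) hnum (mul_pos (by linarith) (by positivity)) hden

lemma le_regIncBeta {a r t : ℝ} (ha : 1 ≤ a) (hr : 0 < r) (hrt : r < t) (ht : t ≤ 1 / 2) :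
    (t - r) * (4 * (r * (1 - r))) ^ (a - 1) ≤ regIncBeta a a t := by
  have hp : 0 ≤ a - 1 := by linarith
  have hrr : 0 < r * (1 - r) := by nlinarith
  have hnum : (t - r) * (r * (1 - r)) ^ (a - 1) ≤
      ∫ s in (0:ℝ)..t, s ^ (a - 1) * (1 - s) ^ (a - 1) :=
    (le_integral_rpow_mul_one_sub_rpow hp hr.le hrt.le (by linarith) hrr.le
      fun s hs => by nlinarith [hs.1, hs.2]).trans
    (integral_rpow_mul_one_sub_rpow_mono hp hp le_rfl hr.le hrt.le le_rfl (by linarith))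
  have hnum_pos : 0 < (t - r) * (r * (1 - r)) ^ (a - 1) :=
    mul_pos (sub_pos.2 hrt) (by positivity)
  have hden : betaFun a a ≤ (1 / 4) ^ (a - 1) := by
    rw [betaFun]
    simpa using integral_rpow_mul_one_sub_rpow_le hp le_rfl zero_le_one le_rfl
      fun s _ => by nlinarith [sq_nonneg (s - 1 / 2)]
  have hB : 0 < betaFun a a := hnum_pos.trans_le (hnum.trans
    (integral_rpow_mul_one_sub_rpow_mono hp hp le_rfl le_rfl (by linarith) (by linarith) le_rfl))
  rw [regIncBeta_of_mem_Ioo ⟨hr.trans hrt, by linarith⟩]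
  calc (t - r) * (4 * (r * (1 - r))) ^ (a - 1)
      = (t - r) * (r * (1 - r)) ^ (a - 1) / (1 / 4) ^ (a - 1) := by
        rw [mul_div_assoc, ← Real.div_rpow hrr.le (by norm_num)]
        ring_nf
    _ ≤ _ := div_le_div₀ (hnum_pos.le.trans hnum) hnum hB hden

end RegIncBeta

section Asymptotics

variable {C lam : ℝ} {n : ℕ → ℕ}

lemma rpow_half_natCast_sub_one_sub_one {q : ℝ} (hq : 0 < q) (d : ℕ) :
    q ^ (((d:ℝ) - 1) / 2 - 1) = q ^ (-(3:ℝ) / 2) * √q ^ d := by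
  rw [Real.sqrt_eq_rpow, ← Real.rpow_natCast, ← Real.rpow_mul hq.le, ← Real.rpow_add hq]
  ring_nf

lemma natCast_mul_rpow_eq_ratio_mul_pow (hC : C ≠ 0) (hlam : lam ≠ 0) {q : ℝ} (hq : 0 < q)
    (K : ℝ) (d : ℕ) :
    (n d : ℝ) * (K * q ^ (((d:ℝ) - 1) / 2 - 1)) =
      (n d : ℝ) / (C * lam ^ d) * (C * K * q ^ (-(3:ℝ) / 2)) * (lam * √q) ^ d := by
  rw [rpow_half_natCast_sub_one_sub_one hq, mul_pow]
  field_simp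

lemma tendsto_natCast_mul_rpow_nhds_zero
    (hn : Tendsto (fun d => (n d : ℝ) / (C * lam ^ d)) atTop (𝓝 1)) (hC : C ≠ 0) (hlam : 0 < lam)
    {q : ℝ} (hq : 0 < q) (hlq : lam ^ 2 * q < 1) (K : ℝ) :
    Tendsto (fun d : ℕ => (n d : ℝ) * (K * q ^ (((d:ℝ) - 1) / 2 - 1))) atTop (𝓝 0) := by
  have hρ : lam * √q < 1 := by
    rw [← Real.sqrt_sq hlam.le, ← Real.sqrt_mul (sq_nonneg _), Real.sqrt_lt' one_pos]
    simpa using hlq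
  have := (hn.mul_const (C * K * q ^ (-(3:ℝ) / 2))).mul
    (tendsto_pow_atTop_nhds_zero_of_lt_one (by positivity) hρ)
  rw [mul_zero] at this
  exact this.congr fun d => (natCast_mul_rpow_eq_ratio_mul_pow hC hlam.ne' hq K d).symm

lemma tendsto_natCast_mul_rpow_atTop
    (hn : Tendsto (fun d => (n d : ℝ) / (C * lam ^ d)) atTop (𝓝 1)) (hC : 0 < C) (hlam : 0 < lam)
    {q : ℝ} (hq : 0 < q) (hlq : 1 < lam ^ 2 * q) {K : ℝ} (hK : 0 < K) :
    Tendsto (fun d : ℕ => (n d : ℝ) * (K * q ^ (((d:ℝ) - 1) / 2 - 1))) atTop atTop := by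
  have hρ : 1 < lam * √q := by
    rw [← Real.sqrt_sq hlam.le, ← Real.sqrt_mul (sq_nonneg _), Real.lt_sqrt zero_le_one]
    simpa using hlq
  have := Tendsto.pos_mul_atTop (C := C * K * q ^ (-(3:ℝ) / 2)) (by positivity)
    (by simpa using hn.mul_const (C * K * q ^ (-(3:ℝ) / 2)))
    (tendsto_pow_atTop_atTop_of_one_lt hρ)
  exact this.congr fun d => (natCast_mul_rpow_eq_ratio_mul_pow hC.ne' hlam.ne' hq K d).symm

end Asymptotics

section Quantile

variable {C lam : ℝ} {n : ℕ → ℕ}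

lemma one_le_half_natCast_sub_one {d : ℕ} (hd : 3 ≤ d) : 1 ≤ ((d:ℝ) - 1) / 2 := by
  have : (3:ℝ) ≤ d := by exact_mod_cast hd
  linarith

lemma lt_of_natCast_mul_regIncBeta_lt {m d : ℕ} (hd : 3 ≤ d) {x y : ℝ} (hx : x ∈ Ioo (0:ℝ) 1)
    (hy : y ∈ Ioo (0:ℝ) 1)
    (h : (m : ℝ) * regIncBeta (((d:ℝ) - 1) / 2) (((d:ℝ) - 1) / 2) x <
      (m : ℝ) * regIncBeta (((d:ℝ) - 1) / 2) (((d:ℝ) - 1) / 2) y) : x < y :=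
  (regIncBeta_monotoneOn (one_le_half_natCast_sub_one hd)
    (one_le_half_natCast_sub_one hd)).reflect_lt hx hy (lt_of_mul_lt_mul_left h m.cast_nonneg)

lemma eventually_natCast_mul_regIncBeta_lt_one
    (hn : Tendsto (fun d => (n d : ℝ) / (C * lam ^ d)) atTop (𝓝 1)) (hC : C ≠ 0)
    (hlam : 0 < lam) {t : ℝ} (ht0 : 0 < t) (ht : t ≤ 1 / 2)
    (htl : 4 * (t * (1 - t)) * lam ^ 2 < 1) :
    ∀ᶠ d : ℕ in atTop, (n d : ℝ) * regIncBeta (((d:ℝ) - 1) / 2) (((d:ℝ) - 1) / 2) t < 1 := by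
  obtain ⟨b, hbt, hb⟩ : ∃ b, t * (1 - t) * lam ^ 2 < b * (1 - b) ∧ b ∈ Ioo 0 (1 / 2) :=
    ((((by fun_prop : Continuous fun b : ℝ => b * (1 - b)).tendsto (1 / 2)).eventually
      (lt_mem_nhds (by linarith))).filter_mono nhdsWithin_le_nhds |>.and
      (Ioo_mem_nhdsLT one_half_pos)).exists
  have hbb : 0 < b * (1 - b) := by nlinarith [hb.1, hb.2]
  have hq : 0 < t * (1 - t) / (b * (1 - b)) := div_pos (by nlinarith) hbb
  have hlq : lam ^ 2 * (t * (1 - t) / (b * (1 - b))) < 1 := by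
    rw [mul_div_assoc', div_lt_one hbb]
    linarith
  filter_upwards [(tendsto_natCast_mul_rpow_nhds_zero hn hC hlam hq hlq
    (t / (1 / 2 - b))).eventually_lt_const one_pos, eventually_ge_atTop 3] with d hlt hd
  exact lt_of_le_of_lt (mul_le_mul_of_nonneg_left
    (regIncBeta_le (one_le_half_natCast_sub_one hd) ht0 ht hb.1 hb.2) (n d).cast_nonneg) hlt

lemma eventually_one_lt_natCast_mul_regIncBeta
    (hn : Tendsto (fun d => (n d : ℝ) / (C * lam ^ d)) atTop (𝓝 1)) (hC : 0 < C)
    (hlam : 0 < lam) {t : ℝ} (ht : t ≤ 1 / 2) (htl : 1 < 4 * (t * (1 - t)) * lam ^ 2) :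
    ∀ᶠ d : ℕ in atTop, 1 < (n d : ℝ) * regIncBeta (((d:ℝ) - 1) / 2) (((d:ℝ) - 1) / 2) t := by
  have ht0 : 0 < t := by
    have : 0 < 4 * (t * (1 - t)) := pos_of_mul_pos_left (by linarith) (sq_nonneg lam)
    nlinarith
  obtain ⟨r, hrl, hr⟩ : ∃ r, 1 < 4 * (r * (1 - r)) * lam ^ 2 ∧ r ∈ Ioo 0 t :=
    ((((by fun_prop : Continuous fun r : ℝ => 4 * (r * (1 - r)) * lam ^ 2).tendsto t).eventually
      (lt_mem_nhds htl)).filter_mono nhdsWithin_le_nhds |>.and (Ioo_mem_nhdsLT ht0)).exists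
  have hq : 0 < 4 * (r * (1 - r)) := by nlinarith [hr.1, hr.2]
  filter_upwards [(tendsto_natCast_mul_rpow_atTop hn hC hlam hq (by linarith)
    (sub_pos.2 hr.2)).eventually_gt_atTop 1, eventually_ge_atTop 3] with d hgt hd
  exact hgt.trans_le (mul_le_mul_of_nonneg_left
    (le_regIncBeta (one_le_half_natCast_sub_one hd) hr.1 hr.2 ht) (n d).cast_nonneg)

end Quantile

section Threshold

variable {lam t : ℝ}

lemma sq_sqrt_one_sub_inv_sq (hlam : 1 ≤ lam) : √(1 - 1 / lam ^ 2) ^ 2 = 1 - 1 / lam ^ 2 :=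
  Real.sq_sqrt (sub_nonneg.2 ((div_le_one (by positivity)).2 (one_le_pow₀ hlam)))

lemma four_mul_mul_one_sub_mul_sq_lt_one (hlam : 1 ≤ lam)
    (ht : t < 1 / 2 * (1 - √(1 - 1 / lam ^ 2))) : 4 * (t * (1 - t)) * lam ^ 2 < 1 := by
  have hs := sq_sqrt_one_sub_inv_sq hlam
  have hs0 := Real.sqrt_nonneg (1 - 1 / lam ^ 2)
  have h : 4 * (t * (1 - t)) < 1 / lam ^ 2 := by nlinarith
  calc 4 * (t * (1 - t)) * lam ^ 2 < 1 / lam ^ 2 * lam ^ 2 := by gcongr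
    _ = 1 := by field_simp

lemma one_lt_four_mul_mul_one_sub_mul_sq (hlam : 1 ≤ lam)
    (ht : 1 / 2 * (1 - √(1 - 1 / lam ^ 2)) < t) (ht' : t ≤ 1 / 2) :
    1 < 4 * (t * (1 - t)) * lam ^ 2 := by
  have hs := sq_sqrt_one_sub_inv_sq hlam
  have h : 1 / lam ^ 2 < 4 * (t * (1 - t)) := by nlinarith
  calc 1 = 1 / lam ^ 2 * lam ^ 2 := by field_simp
    _ < 4 * (t * (1 - t)) * lam ^ 2 := by gcongr

end Threshold

/-- If `n = n(d) = C λ^d (1+o(1))` as `d → ∞`, with `λ > 1`, `C > 0`, then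
the `1/n(d)` quantile `κ_{n(d),d}` of `Beta((d-1)/2,(d-1)/2)` converges to
`(1/2)[1 - √(1 - 1/λ²)]`. -/
theorem stmt17 (C lam : ℝ) (hC : 0 < C) (hlam : 1 < lam) (n : ℕ → ℕ)
    (hn : Filter.Tendsto (fun d => (n d : ℝ) / (C * lam ^ d)) Filter.atTop (nhds 1))
    (κ : ℕ → ℝ)
    (hκ : ∀ d, 3 ≤ d → κ d ∈ Set.Ioc (0:ℝ) (1/2) ∧
      regIncBeta (((d:ℝ) - 1)/2) (((d:ℝ) - 1)/2) (κ d) = 1/(n d : ℝ)) :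
    Filter.Tendsto κ Filter.atTop
      (nhds ((1/2) * (1 - Real.sqrt (1 - 1/lam ^ 2)))) := by
  have hlam0 : 0 < lam := by linarith
  have hκ_mem : ∀ d, 3 ≤ d → κ d ∈ Ioo (0:ℝ) 1 :=
    fun d hd => ⟨(hκ d hd).1.1, by linarith [(hκ d hd).1.2]⟩
  have hquantile : ∀ᶠ d in atTop, 3 ≤ d ∧
      (n d : ℝ) * regIncBeta (((d:ℝ) - 1) / 2) (((d:ℝ) - 1) / 2) (κ d) = 1 := by
    filter_upwards [eventually_ge_atTop 3, hn.eventually_ne one_ne_zero] with d hd hne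
    have hn0 : (n d : ℝ) ≠ 0 := fun h => hne (by rw [h, zero_div])
    exact ⟨hd, by rw [(hκ d hd).2, mul_one_div_cancel hn0]⟩
  refine tendsto_order.2 ⟨fun t ht => ?_, fun t ht => ?_⟩
  · rcases le_or_gt t 0 with ht0 | ht0
    · filter_upwards [eventually_ge_atTop 3] with d hd using ht0.trans_lt (hκ d hd).1.1
    have ht2 : t ≤ 1 / 2 := by linarith [Real.sqrt_nonneg (1 - 1 / lam ^ 2)]
    filter_upwards [hquantile, eventually_natCast_mul_regIncBeta_lt_one hn hC.ne' hlam0 ht0 ht2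
      (four_mul_mul_one_sub_mul_sq_lt_one hlam.le ht)] with d ⟨hd, hone⟩ hlt
    exact lt_of_natCast_mul_regIncBeta_lt hd ⟨ht0, by linarith⟩ (hκ_mem d hd)
      (hlt.trans_eq hone.symm)
  · rcases lt_or_ge (1 / 2) t with ht2 | ht2
    · filter_upwards [eventually_ge_atTop 3] with d hd using (hκ d hd).1.2.trans_lt ht2
    have ht0 : 0 < t := by
      linarith [Real.sqrt_le_one.2 (sub_le_self 1 (by positivity : (0:ℝ) ≤ 1 / lam ^ 2))]
    filter_upwards [hquantile, eventually_one_lt_natCast_mul_regIncBeta hn hC hlam0 ht2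
      (one_lt_four_mul_mul_one_sub_mul_sq hlam.le ht ht2)]
      with d ⟨hd, hone⟩ hgt
    exact lt_of_natCast_mul_regIncBeta_lt hd (hκ_mem d hd) ⟨ht0, by linarith⟩
      (hone.trans_lt hgt)
end
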